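/- arXiv:2510.12077 — 2 statements merged into one kernel-verified Lean document; each statement's English description precedes it below -/
import Mathlib

section
/- Let X be a finite set and let 0 < m ≤ 1/|X|. Then there exists a constant C > 0 (one may take C = 1/(2m)) such that for all probability distributions q, p, p' in the restricted simplex Δ̊_m(X), D(p‖p') ≤ C·(D(q‖p) + D(q‖p')). -/
open Finset

/-- A probability distribution on a finite type: nonnegative and sums to 1. -/
def IsProb {X : Type*} [Fintype X] (p : X → ℝ) : Prop :=
  (∀ x, 0 ≤ p x) ∧ ∑ x, p x = 1

/-- Kullback–Leibler divergence between distributions on a finite type. -/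
noncomputable def klDiv {X : Type*} [Fintype X] (q p : X → ℝ) : ℝ :=
  ∑ x, q x * Real.log (q x / p x)

/-!
Each summand `q log (q / p) - q + p` of `D(q‖p)` (they add up to `D(q‖p)` because `q` and `p` both
have mass one) lies between `(q - p)² / 2`, when `q, p ≤ 1`, and `(q - p)² / p ≤ (q - p)² / m`.
So on `Δ̊_m(X)` the divergence is comparable to the squared Euclidean distance, which satisfies
the triangle inequality `‖p - p'‖² ≤ 2‖q - p‖² + 2‖q - p'‖²`; this gives `C = 4 / m`.
-/

open Real Set

section PointwiseBounds

variable {a b c : ℝ}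

lemma hasDerivAt_mul_log_div_sub_add_sub_sq (hb : b ≠ 0) (c : ℝ) {x : ℝ} (hx : 0 < x) :
    HasDerivAt (fun y => y * log (y / b) - y + b - (y - b) ^ 2 / (2 * c))
      (log (x / b) - (x - b) / c) x := by
  have hlog : HasDerivAt (fun y => log (y / b)) x⁻¹ x := by
    convert ((hasDerivAt_id' x).div_const b).log (div_ne_zero hx.ne' hb) using 1
    field_simp
  refine (((((hasDerivAt_id' x).mul hlog).sub (hasDerivAt_id' x)).add_const b).sub
    ((((hasDerivAt_id' x).sub_const b).pow 2).div_const (2 * c))).congr_deriv ?_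
  rw [mul_inv_cancel₀ hx.ne']
  ring

lemma sq_sub_div_le_mul_log_div_sub_add (ha : 0 < a) (hb : 0 < b) (hac : a ≤ c) (hbc : b ≤ c) :
    (a - b) ^ 2 / (2 * c) ≤ a * log (a / b) - a + b := by
  set f : ℝ → ℝ := fun y => y * log (y / b) - y + b - (y - b) ^ 2 / (2 * c)
  have hf' : ∀ x, 0 < x → HasDerivAt f (log (x / b) - (x - b) / c) x :=
    fun x hx => hasDerivAt_mul_log_div_sub_add_sub_sq hb.ne' c hx
  have hcont : ∀ s ⊆ Set.Ioi 0, ContinuousOn f s :=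
    fun s hs x hx => (hf' x (hs hx)).continuousAt.continuousWithinAt
  have hfb : f b = 0 := by simp [f, hb.ne']
  suffices 0 ≤ f a by simp only [f] at this; linarith
  rcases le_total b a with hba | hab
  · -- on `[b, c]`: `log (x / b) ≥ 1 - b / x = (x - b) / x ≥ (x - b) / c`
    have hmono : MonotoneOn f (Icc b c) := by
      refine monotoneOn_of_hasDerivWithinAt_nonneg (f' := fun x => log (x / b) - (x - b) / c)
        (convex_Icc b c) (hcont _ fun x hx => hb.trans_le hx.1)
        (fun x hx => ?_) (fun x hx => ?_)
      all_goals rw [interior_Icc] at hx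
      · exact (hf' x (hb.trans hx.1)).hasDerivWithinAt
      · have hx0 : 0 < x := hb.trans hx.1
        have h1 := one_sub_inv_le_log_of_pos (div_pos hx0 hb)
        have h2 : (x - b) / c ≤ 1 - (x / b)⁻¹ := by
          rw [inv_div, one_sub_div hx0.ne']
          exact div_le_div_of_nonneg_left (by linarith [hx.1]) hx0 hx.2.le
        linarith
    simpa [hfb] using hmono ⟨le_rfl, hbc⟩ ⟨hba, hac⟩ hba
  · -- on `[a, b]`: `log (x / b) ≤ x / b - 1 = (x - b) / b ≤ (x - b) / c`
    have hanti : AntitoneOn f (Icc a b) := by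
      refine antitoneOn_of_hasDerivWithinAt_nonpos (f' := fun x => log (x / b) - (x - b) / c)
        (convex_Icc a b) (hcont _ fun x hx => ha.trans_le hx.1)
        (fun x hx => ?_) (fun x hx => ?_)
      all_goals rw [interior_Icc] at hx
      · exact (hf' x (ha.trans hx.1)).hasDerivWithinAt
      · have h1 := log_le_sub_one_of_pos (div_pos (ha.trans hx.1) hb)
        have h2 : (x - b) / b ≤ (x - b) / c := by
          rw [← neg_sub b x, neg_div, neg_div, neg_le_neg_iff]
          exact div_le_div_of_nonneg_left (sub_nonneg.2 hx.2.le) hb hbc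
        rw [div_sub_one hb.ne'] at h1
        linarith
    simpa [hfb] using hanti ⟨le_rfl, hab⟩ ⟨hab, le_rfl⟩ hab

lemma mul_log_div_sub_add_le_sq_sub_div (ha : 0 ≤ a) (hb : 0 < b) :
    a * log (a / b) - a + b ≤ (a - b) ^ 2 / b := by
  rcases ha.eq_or_lt with rfl | ha
  · simp [sq, hb.ne']
  have h := mul_le_mul_of_nonneg_left (log_le_sub_one_of_pos (div_pos ha hb)) ha.le
  have : a * (a / b - 1) - a + b = (a - b) ^ 2 / b := by field_simp; ring
  linarith

end PointwiseBounds

lemma sum_sq_sub_le {X : Type*} (s : Finset X) (q p p' : X → ℝ) :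
    ∑ x ∈ s, (p x - p' x) ^ 2 ≤
      2 * ∑ x ∈ s, (q x - p x) ^ 2 + 2 * ∑ x ∈ s, (q x - p' x) ^ 2 := by
  rw [mul_sum, mul_sum, ← sum_add_distrib]
  gcongr with x
  nlinarith [sq_nonneg (2 * q x - p x - p' x)]

section KL

variable {X : Type*} [Fintype X] {q p p' : X → ℝ}

lemma IsProb.le_one (hp : IsProb p) (x : X) : p x ≤ 1 :=
  hp.2 ▸ single_le_sum (fun y _ => hp.1 y) (mem_univ x)

lemma klDiv_eq_sum_mul_log_div_sub_add (hq : IsProb q) (hp : IsProb p) :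
    klDiv q p = ∑ x, (q x * log (q x / p x) - q x + p x) := by
  rw [sum_add_distrib, sum_sub_distrib, hq.2, hp.2, klDiv]
  ring

lemma sum_sq_sub_div_two_le_klDiv (hq : IsProb q) (hp : IsProb p) (hq₀ : ∀ x, 0 < q x)
    (hp₀ : ∀ x, 0 < p x) :
    (∑ x, (q x - p x) ^ 2) / 2 ≤ klDiv q p := by
  rw [klDiv_eq_sum_mul_log_div_sub_add hq hp, sum_div]
  gcongr with x
  simpa using sq_sub_div_le_mul_log_div_sub_add (hq₀ x) (hp₀ x) (hq.le_one x) (hp.le_one x)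

lemma klDiv_le_sum_sq_sub_div {m : ℝ} (hm : 0 < m) (hp : IsProb p) (hp' : IsProb p')
    (hp'm : ∀ x, m ≤ p' x) :
    klDiv p p' ≤ (∑ x, (p x - p' x) ^ 2) / m := by
  rw [klDiv_eq_sum_mul_log_div_sub_add hp hp', sum_div]
  gcongr with x
  calc p x * log (p x / p' x) - p x + p' x ≤ (p x - p' x) ^ 2 / p' x :=
        mul_log_div_sub_add_le_sq_sub_div (hp.1 x) (hm.trans_le (hp'm x))
    _ ≤ (p x - p' x) ^ 2 / m := div_le_div_of_nonneg_left (sq_nonneg _) hm (hp'm x)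

end KL

theorem stmt2_general {X : Type*} [Fintype X]
    (m : ℝ) (hm : 0 < m) :
    ∃ C : ℝ, 0 < C ∧
      ∀ q p p' : X → ℝ,
        IsProb q → (∀ x, m ≤ q x) →
        IsProb p → (∀ x, m ≤ p x) →
        IsProb p' → (∀ x, m ≤ p' x) →
        klDiv p p' ≤ C * (klDiv q p + klDiv q p') := by
  refine ⟨4 / m, by positivity, fun q p p' hq hqm hp hpm hp' hpm' => ?_⟩
  have hq₀ x : 0 < q x := hm.trans_le (hqm x)
  have hp₀ x : 0 < p x := hm.trans_le (hpm x)
  have hp'₀ x : 0 < p' x := hm.trans_le (hpm' x)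
  have hqp := sum_sq_sub_div_two_le_klDiv hq hp hq₀ hp₀
  have hqp' := sum_sq_sub_div_two_le_klDiv hq hp' hq₀ hp'₀
  calc klDiv p p' ≤ (∑ x, (p x - p' x) ^ 2) / m := klDiv_le_sum_sq_sub_div hm hp hp' hpm'
    _ ≤ (2 * ∑ x, (q x - p x) ^ 2 + 2 * ∑ x, (q x - p' x) ^ 2) / m := by
        gcongr; exact sum_sq_sub_le _ q p p'
    _ ≤ 4 / m * (klDiv q p + klDiv q p') := by
        rw [div_mul_eq_mul_div]; gcongr; linarith

/-- a pseudo triangle inequality for KL divergence on the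
restricted simplex `Δ̊_m(X)`: there is `C > 0` with
`D(p‖p') ≤ C·(D(q‖p) + D(q‖p'))` for all `q, p, p' ∈ Δ̊_m(X)`. -/
theorem stmt2 {X : Type*} [Fintype X] (hX : 2 ≤ Fintype.card X)
    (m : ℝ) (hm : 0 < m) (hm' : m ≤ 1 / (Fintype.card X : ℝ)) :
    ∃ C : ℝ, 0 < C ∧
      ∀ q p p' : X → ℝ,
        IsProb q → (∀ x, m ≤ q x) →
        IsProb p → (∀ x, m ≤ p x) →
        IsProb p' → (∀ x, m ≤ p' x) →
        klDiv p p' ≤ C * (klDiv q p + klDiv q p') :=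
  stmt2_general m hm
end

section
/- Let X be a finite set with at least two elements and let 0 < m ≤ 1/|X|. Then there exist constants C ≥ 1, a > 0 and b > 0 (depending only on m) such that for every ε > 0 and all probability distributions q, p̂, p* in the restricted simplex Δ̊_m(X) with D(p̂‖p*) ≤ ε, one has a·D(q‖p̂) − b·ε ≤ D(q‖p*) ≤ C·D(q‖p̂) + C·ε. -/
open Finset

/-- Pointwise lower bound: `(q-p)²/4 ≤ q log(q/p) - q + p` on `(0,1]`. -/
lemma kl_point_lb {q p : ℝ} (hq0 : 0 < q) (hq1 : q ≤ 1) (hp0 : 0 < p) (hp1 : p ≤ 1) :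
    (q - p)^2 / 4 ≤ q * Real.log (q/p) - q + p := by
  set a := Real.sqrt q with hadef
  set b := Real.sqrt p with hbdef
  have ha0 : 0 < a := Real.sqrt_pos.2 hq0
  have hb0 : 0 < b := Real.sqrt_pos.2 hp0
  have ha : a^2 = q := Real.sq_sqrt hq0.le
  have hb : b^2 = p := Real.sq_sqrt hp0.le
  have ha1 : a ≤ 1 := Real.sqrt_le_one.2 hq1
  have hb1 : b ≤ 1 := Real.sqrt_le_one.2 hp1
  have hlog : Real.log (q/p) = 2 * (Real.log a - Real.log b) := by
    rw [Real.log_div hq0.ne' hp0.ne', hadef, hbdef, Real.log_sqrt hq0.le, Real.log_sqrt hp0.le]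
    ring
  have h1 : 1 - b / a ≤ Real.log a - Real.log b := by
    have h := Real.one_sub_inv_le_log_of_pos (div_pos ha0 hb0)
    rwa [Real.log_div ha0.ne' hb0.ne', inv_div] at h
  have key : 2*a^2 - 2*a*b ≤ q * Real.log (q/p) := by
    rw [hlog, ← ha]
    have h2 : a^2 * (2 * (1 - b/a)) = 2*a^2 - 2*a*b := by
      field_simp
    nlinarith [mul_le_mul_of_nonneg_left h1 (by positivity : (0:ℝ) ≤ 2 * a^2)]
  have hsq : (a+b)^2 ≤ 4 := by nlinarith
  have h3 : (a^2 - b^2)^2 ≤ 4 * (a - b)^2 := by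
    nlinarith [mul_le_mul_of_nonneg_left hsq (sq_nonneg (a - b))]
  have h4 : (q - p)^2 ≤ 4 * (a - b)^2 := by rw [← ha, ← hb]; exact h3
  nlinarith [key, h4, ha, hb]

/-- Pointwise upper bound: `q log(q/p) - q + p ≤ (q-p)²/p`. -/
lemma kl_point_ub {q p : ℝ} (hq0 : 0 ≤ q) (hp0 : 0 < p) :
    q * Real.log (q/p) - q + p ≤ (q - p)^2 / p := by
  rcases eq_or_lt_of_le hq0 with h | h
  · rw [← h, show (0:ℝ) * Real.log (0/p) - 0 + p = p from by ring, le_div_iff₀ hp0]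
    nlinarith
  · have hl : Real.log (q/p) ≤ q/p - 1 := Real.log_le_sub_one_of_pos (div_pos h hp0)
    have h1 : q * Real.log (q/p) ≤ q * (q/p - 1) := mul_le_mul_of_nonneg_left hl h.le
    have h2 : q * (q/p - 1) - q + p = (q-p)^2 / p := by field_simp; ring
    linarith

lemma kl_eq {X : Type*} [Fintype X] {q p : X → ℝ} (hq : ∑ x, q x = 1) (hp : ∑ x, p x = 1) :
    klDiv q p = ∑ x, (q x * Real.log (q x / p x) - q x + p x) := by
  unfold klDiv
  rw [Finset.sum_add_distrib, Finset.sum_sub_distrib, hq, hp]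
  ring

lemma prob_le_one {X : Type*} [Fintype X] {p : X → ℝ} (hp : IsProb p) (x : X) : p x ≤ 1 := by
  have h := Finset.single_le_sum (f := p) (fun i _ => hp.1 i) (Finset.mem_univ x)
  rwa [hp.2] at h

/-- Summed lower bound. -/
lemma kl_sum_lb {X : Type*} [Fintype X] {m : ℝ} (hm : 0 < m) {q p : X → ℝ}
    (hq : IsProb q) (hqm : ∀ x, m ≤ q x) (hp : IsProb p) (hpm : ∀ x, m ≤ p x) :
    ∑ x, (q x - p x)^2 ≤ 4 * klDiv q p := by
  rw [kl_eq hq.2 hp.2, Finset.mul_sum]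
  apply Finset.sum_le_sum
  intro x _
  have h := kl_point_lb (lt_of_lt_of_le hm (hqm x)) (prob_le_one hq x)
    (lt_of_lt_of_le hm (hpm x)) (prob_le_one hp x)
  linarith

/-- Summed upper bound. -/
lemma kl_sum_ub {X : Type*} [Fintype X] {m : ℝ} (hm : 0 < m) {q p : X → ℝ}
    (hq : IsProb q) (hp : IsProb p) (hpm : ∀ x, m ≤ p x) :
    m * klDiv q p ≤ ∑ x, (q x - p x)^2 := by
  rw [kl_eq hq.2 hp.2, Finset.mul_sum]
  apply Finset.sum_le_sum
  intro x _
  have hpx : 0 < p x := lt_of_lt_of_le hm (hpm x)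
  have h := kl_point_ub (hq.1 x) hpx
  have h2 : (q x - p x)^2 / p x ≤ (q x - p x)^2 / m :=
    div_le_div_of_nonneg_left (sq_nonneg _) hm (hpm x)
  have h3 : m * ((q x - p x)^2 / m) = (q x - p x)^2 := by field_simp
  nlinarith [h, h2]

/-- there are constants `C ≥ 1`, `a > 0`, `b > 0` (depending only
on `m`) such that for all `ε > 0` and `q, p̂, p* ∈ Δ̊_m(X)` with `D(p̂‖p*) ≤ ε`,
`a·D(q‖p̂) − b·ε ≤ D(q‖p*) ≤ C·D(q‖p̂) + C·ε`. -/
theorem stmt12 {X : Type*} [Fintype X] (hX : 2 ≤ Fintype.card X)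
    (m : ℝ) (hm : 0 < m) (hm' : m ≤ 1 / (Fintype.card X : ℝ)) :
    ∃ C a b : ℝ, 1 ≤ C ∧ 0 < a ∧ 0 < b ∧
      ∀ ε : ℝ, 0 < ε →
        ∀ q phat pstar : X → ℝ,
          IsProb q → (∀ x, m ≤ q x) →
          IsProb phat → (∀ x, m ≤ phat x) →
          IsProb pstar → (∀ x, m ≤ pstar x) →
          klDiv phat pstar ≤ ε →
          a * klDiv q phat - b * ε ≤ klDiv q pstar ∧
          klDiv q pstar ≤ C * klDiv q phat + C * ε := by
  have hcard : (2:ℝ) ≤ (Fintype.card X : ℝ) := by exact_mod_cast hX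
  have hcard0 : (0:ℝ) < (Fintype.card X : ℝ) := by linarith
  have hm8 : m ≤ 8 := by
    have h1 : 1 / (Fintype.card X : ℝ) ≤ 1 := by
      rw [div_le_one hcard0]; linarith
    linarith
  refine ⟨8/m, m/8, 1, ?_, by positivity, one_pos, ?_⟩
  · rw [le_div_iff₀ hm]; linarith
  intro ε hε q phat pstar hq hqm hphat hphatm hpstar hpstarm hkl
  set S1 := ∑ x, (q x - phat x)^2 with hS1
  set S2 := ∑ x, (phat x - pstar x)^2 with hS2
  set S3 := ∑ x, (q x - pstar x)^2 with hS3
  have triangle1 : S3 ≤ 2 * S1 + 2 * S2 := by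
    rw [hS1, hS2, hS3, Finset.mul_sum, Finset.mul_sum, ← Finset.sum_add_distrib]
    apply Finset.sum_le_sum
    intro x _
    nlinarith [sq_nonneg (q x - 2 * phat x + pstar x)]
  have triangle2 : S1 ≤ 2 * S3 + 2 * S2 := by
    rw [hS1, hS2, hS3, Finset.mul_sum, Finset.mul_sum, ← Finset.sum_add_distrib]
    apply Finset.sum_le_sum
    intro x _
    nlinarith [sq_nonneg (q x - 2 * pstar x + phat x)]
  have f1 : S1 ≤ 4 * klDiv q phat := kl_sum_lb hm hq hqm hphat hphatm
  have f2 : S3 ≤ 4 * klDiv q pstar := kl_sum_lb hm hq hqm hpstar hpstarm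
  have f3 : S2 ≤ 4 * klDiv phat pstar := kl_sum_lb hm hphat hphatm hpstar hpstarm
  have f4 : m * klDiv q pstar ≤ S3 := kl_sum_ub hm hq hpstar hpstarm
  have f5 : m * klDiv q phat ≤ S1 := kl_sum_ub hm hq hphat hphatm
  constructor
  · -- lower bound: m/8 * klDiv q phat - ε ≤ klDiv q pstar
    have h : m * klDiv q phat ≤ 8 * klDiv q pstar + 8 * ε := by
      calc m * klDiv q phat ≤ S1 := f5
        _ ≤ 2 * S3 + 2 * S2 := triangle2
        _ ≤ 8 * klDiv q pstar + 8 * klDiv phat pstar := by linarith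
        _ ≤ 8 * klDiv q pstar + 8 * ε := by linarith
    nlinarith [h]
  · -- upper bound
    have h : m * klDiv q pstar ≤ 8 * klDiv q phat + 8 * ε := by
      calc m * klDiv q pstar ≤ S3 := f4
        _ ≤ 2 * S1 + 2 * S2 := triangle1
        _ ≤ 8 * klDiv q phat + 8 * klDiv phat pstar := by linarith
        _ ≤ 8 * klDiv q phat + 8 * ε := by linarith
    have h2 : klDiv q pstar ≤ (8 * klDiv q phat + 8 * ε) / m := by
      rw [le_div_iff₀ hm]; linarith [mul_comm (klDiv q pstar) m]
    calc klDiv q pstar ≤ (8 * klDiv q phat + 8 * ε) / m := h2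
      _ = 8/m * klDiv q phat + 8/m * ε := by ring
end
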